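/- arXiv:math/0407002 — 3 statements merged into one kernel-verified Lean document; each statement's English description precedes it below -/
import Mathlib

section
/- Let A be a smooth n-manifold and k ≥ 1. The projection π_{k+1,k} : F_{k+1}(A×J) → F_k(A×J) forgetting the last point is a locally trivial fiber bundle: for every point q = ((q_1,t_1),…,(q_k,t_k)) ∈ F_k(A×J) there exist an open neighborhood U of q in F_k(A×J) and a homeomorphism h : π_{k+1,k}^{-1}(U) → U × ((A × [−k, k]) \ {(q_1,t_1),…,(q_k,t_k)}) whose first component is π_{k+1,k}. -/
open scoped Manifold unitInterval

noncomputable section ConfigPrelude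

/-- The ordered configuration space of `k` distinct points in `M`. -/
def Config (M : Type*) [TopologicalSpace M] (k : ℕ) : Type _ :=
  {x : Fin k → M // Function.Injective x}

instance Config.instTopologicalSpace (M : Type*) [TopologicalSpace M] (k : ℕ) :
    TopologicalSpace (Config M k) :=
  inferInstanceAs (TopologicalSpace {x : Fin k → M // Function.Injective x})

/-- The subspace inclusion `F₂(M) ↪ M × M`. -/
def configIncl₂ (M : Type*) [TopologicalSpace M] : C(Config M 2, M × M) :=
  ⟨fun x => (x.1 0, x.1 1),
    ((continuous_apply (0 : Fin 2)).comp continuous_subtype_val).prodMk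
      ((continuous_apply (1 : Fin 2)).comp continuous_subtype_val)⟩

/-- A homotopy equivalence `f : A → B` is an F₂-homotopy equivalence if there is a
homotopy equivalence `φ : F₂(A) → F₂(B)` with `ι_B ∘ φ` homotopic to `(f × f) ∘ ι_A`. -/
def IsF2HomotopyEquiv {A B : Type*} [TopologicalSpace A] [TopologicalSpace B]
    (f : ContinuousMap.HomotopyEquiv A B) : Prop :=
  ∃ φ : ContinuousMap.HomotopyEquiv (Config A 2) (Config B 2),
    ((configIncl₂ B).comp φ.toFun).Homotopic
      ((f.toFun.prodMap f.toFun).comp (configIncl₂ A))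

/-- A continuous map is a homotopy equivalence. -/
def IsHtpyEquiv {X Y : Type*} [TopologicalSpace X] [TopologicalSpace Y] (f : C(X, Y)) : Prop :=
  ∃ g : C(Y, X), (g.comp f).Homotopic (ContinuousMap.id X) ∧
    (f.comp g).Homotopic (ContinuousMap.id Y)

/-- The projection of a configuration of `k` points onto its first `r` points. -/
def configProjLE (M : Type*) [TopologicalSpace M] {k r : ℕ} (h : r ≤ k) :
    C(Config M k, Config M r) :=
  ⟨fun x => ⟨fun i => x.1 (Fin.castLE h i),
      fun i j hij => Fin.ext (by simpa using congrArg Fin.val (x.2 hij))⟩, by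
    apply Continuous.subtype_mk
    apply continuous_pi
    intro i
    exact (continuous_apply (Fin.castLE h i)).comp continuous_subtype_val⟩

/-- `F_k(A×J)` : configurations `((a₁,t₁),…,(a_k,t_k))` in `A × ℝ` with `|tᵢ| ≤ i − 1`
(0-indexed: `|t_i| ≤ i`). -/
def ConfigJ (A : Type*) [TopologicalSpace A] (k : ℕ) : Type _ :=
  {x : Fin k → A × ℝ // Function.Injective x ∧ ∀ i : Fin k, |(x i).2| ≤ (i.val : ℝ)}

instance ConfigJ.instTopologicalSpace (A : Type*) [TopologicalSpace A] (k : ℕ) :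
    TopologicalSpace (ConfigJ A k) :=
  inferInstanceAs (TopologicalSpace
    {x : Fin k → A × ℝ // Function.Injective x ∧ ∀ i : Fin k, |(x i).2| ≤ (i.val : ℝ)})

/-- The subspace inclusion `F_k(A×J) ↪ F_k(A×ℝ)`. -/
def configJIncl (A : Type*) [TopologicalSpace A] (k : ℕ) :
    C(ConfigJ A k, Config (A × ℝ) k) :=
  ⟨fun x => ⟨x.1, x.2.1⟩, Continuous.subtype_mk continuous_subtype_val _⟩

/-- The projection of `F_k(A×J)` onto the first `r` points. -/
def configJProjLE (A : Type*) [TopologicalSpace A] {k r : ℕ} (h : r ≤ k) :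
    C(ConfigJ A k, ConfigJ A r) :=
  ⟨fun x => ⟨fun i => x.1 (Fin.castLE h i),
      ⟨fun i j hij => Fin.ext (by simpa using congrArg Fin.val (x.2.1 hij)),
       fun i => by simpa using x.2.2 (Fin.castLE h i)⟩⟩, by
    apply Continuous.subtype_mk
    apply continuous_pi
    intro i
    exact (continuous_apply (Fin.castLE h i)).comp continuous_subtype_val⟩

lemma abs_coe_end {k : ℕ} (ε : ({-(k : ℝ), (k : ℝ)} : Set ℝ)) : |(ε : ℝ)| = (k : ℝ) := by
  rcases ε.2 with h | h <;> rw [h] <;> simp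

/-- Appending a point `(a, ε)` with `ε ∈ {−k, k}` to a configuration in `F_k(A×J)` gives a
configuration in `∂F_{k+1}(A×J) ⊆ F_{k+1}(A×J)`. -/
def configJAppend (A : Type*) [TopologicalSpace A] (k : ℕ) :
    C(ConfigJ A k × (A × ({-(k : ℝ), (k : ℝ)} : Set ℝ)), ConfigJ A (k + 1)) := by
  refine ⟨fun p => ⟨Fin.snoc p.1.1 (p.2.1, (p.2.2 : ℝ)), ?_, ?_⟩, ?_⟩
  · intro i j hij
    induction i using Fin.lastCases with
    | last =>
      induction j using Fin.lastCases with
      | last => rfl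
      | cast j =>
        exfalso
        rw [Fin.snoc_last, Fin.snoc_castSucc] at hij
        have h1 : |((p.1.1 j).2)| ≤ (j.val : ℝ) := p.1.2.2 j
        have h2 : ((p.1.1 j).2) = (p.2.2 : ℝ) := (congrArg Prod.snd hij).symm
        have h3 : ((j.val : ℕ) : ℝ) < (k : ℝ) := by exact_mod_cast j.2
        rw [h2, abs_coe_end] at h1
        try simp only [Fin.val_castSucc] at *
        linarith
    | cast i =>
      induction j using Fin.lastCases with
      | last =>
        exfalso
        rw [Fin.snoc_last, Fin.snoc_castSucc] at hij
        have h1 : |((p.1.1 i).2)| ≤ (i.val : ℝ) := p.1.2.2 i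
        have h2 : ((p.1.1 i).2) = (p.2.2 : ℝ) := congrArg Prod.snd hij
        have h3 : ((i.val : ℕ) : ℝ) < (k : ℝ) := by exact_mod_cast i.2
        rw [h2, abs_coe_end] at h1
        linarith
      | cast j =>
        rw [Fin.snoc_castSucc, Fin.snoc_castSucc] at hij
        exact congrArg Fin.castSucc (p.1.2.1 hij)
  · intro i
    induction i using Fin.lastCases with
    | last => rw [Fin.snoc_last]; simp [abs_coe_end]
    | cast i => rw [Fin.snoc_castSucc]; simpa using p.1.2.2 i
  · refine Continuous.subtype_mk (continuous_pi fun i => ?_) _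
    induction i using Fin.lastCases with
    | last =>
      simp only [Fin.snoc_last]
      exact ((continuous_fst.comp continuous_snd).prodMk
        (continuous_subtype_val.comp (continuous_snd.comp continuous_snd)))
    | cast i =>
      simp only [Fin.snoc_castSucc]
      exact (continuous_apply i).comp (continuous_subtype_val.comp continuous_fst)

/-- A two-point configuration. -/
def config2 {M : Type*} [TopologicalSpace M] (p q : M) (h : p ≠ q) : Config M 2 :=
  ⟨![p, q], by intro i j hij; fin_cases i <;> fin_cases j <;> simp_all⟩

/-- A three-point configuration. -/
def config3 {M : Type*} [TopologicalSpace M] (p q r : M)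
    (h1 : p ≠ q) (h2 : p ≠ r) (h3 : q ≠ r) : Config M 3 :=
  ⟨![p, q, r], by intro i j hij; fin_cases i <;> fin_cases j <;> simp_all⟩

/-- Generating relation for the unreduced suspension. -/
def SuspRel (X : Type*) : (X × unitInterval) → (X × unitInterval) → Prop := fun p q =>
  (p.2 = 0 ∧ q.2 = 0) ∨ (p.2 = 1 ∧ q.2 = 1)

/-- The unreduced suspension of a space. -/
def Susp (X : Type*) [TopologicalSpace X] : Type _ := Quot (SuspRel X)

instance Susp.instTopologicalSpace (X : Type*) [TopologicalSpace X] :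
    TopologicalSpace (Susp X) :=
  inferInstanceAs (TopologicalSpace (Quot (SuspRel X)))

/-- The unreduced suspension as an endofunctor of `TopCat` (on objects). -/
def SuspT (X : TopCat) : TopCat := TopCat.of (Susp X)

/-- The iterated unreduced suspension. -/
def IterSuspT : ℕ → TopCat → TopCat
  | 0, X => X
  | m + 1, X => SuspT (IterSuspT m X)

/-- Generating relation for the double mapping cylinder of a span `X ←f− W −g→ Z`. -/
inductive DMCRel {W X Z : Type*} (f : W → X) (g : W → Z) :
    (X ⊕ ((W × unitInterval) ⊕ Z)) → (X ⊕ ((W × unitInterval) ⊕ Z)) → Prop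
  | zero (w : W) : DMCRel f g (Sum.inl (f w)) (Sum.inr (Sum.inl (w, 0)))
  | one (w : W) : DMCRel f g (Sum.inr (Sum.inr (g w))) (Sum.inr (Sum.inl (w, 1)))

/-- The double mapping cylinder of a span `X ←f− W −g→ Z`. -/
def DblCyl {W X Z : Type*} [TopologicalSpace W] [TopologicalSpace X] [TopologicalSpace Z]
    (f : W → X) (g : W → Z) : Type _ := Quot (DMCRel f g)

instance DblCyl.instTopologicalSpace {W X Z : Type*} [TopologicalSpace W] [TopologicalSpace X]
    [TopologicalSpace Z] (f : W → X) (g : W → Z) : TopologicalSpace (DblCyl f g) :=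
  inferInstanceAs (TopologicalSpace (Quot (DMCRel f g)))

/-- The homotopy fiber of `v : C → Y` over `y : Y`. -/
def HFiber {X Y : Type*} [TopologicalSpace X] [TopologicalSpace Y] (v : C(X, Y)) (y : Y) :
    Type _ :=
  {p : X × C(unitInterval, Y) // p.2 0 = v p.1 ∧ p.2 1 = y}

instance HFiber.instTopologicalSpace {X Y : Type*} [TopologicalSpace X] [TopologicalSpace Y]
    (v : C(X, Y)) (y : Y) : TopologicalSpace (HFiber v y) :=
  inferInstanceAs (TopologicalSpace {p : X × C(unitInterval, Y) // p.2 0 = v p.1 ∧ p.2 1 = y})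

/-- The standard homotopy pullback of `p : X → B` and `q : Y → B`. -/
def HPullback {X Y B : Type*} [TopologicalSpace X] [TopologicalSpace Y] [TopologicalSpace B]
    (p : C(X, B)) (q : C(Y, B)) : Type _ :=
  {u : X × C(unitInterval, B) × Y // u.2.1 0 = p u.1 ∧ u.2.1 1 = q u.2.2}

instance HPullback.instTopologicalSpace {X Y B : Type*} [TopologicalSpace X]
    [TopologicalSpace Y] [TopologicalSpace B] (p : C(X, B)) (q : C(Y, B)) :
    TopologicalSpace (HPullback p q) :=
  inferInstanceAs (TopologicalSpace
    {u : X × C(unitInterval, B) × Y // u.2.1 0 = p u.1 ∧ u.2.1 1 = q u.2.2})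

/-- A space is 2-connected if it is path-connected, simply connected, and has trivial `π₂`. -/
def TwoConnected (X : Type*) [TopologicalSpace X] : Prop :=
  PathConnectedSpace X ∧ SimplyConnectedSpace X ∧
    ∀ x : X, Subsingleton (HomotopyGroup (Fin 2) X x)

/-- A type retopologized with the discrete topology. -/
def DiscretePoints (α : Type*) : Type _ := α

instance DiscretePoints.instTopologicalSpace (α : Type*) :
    TopologicalSpace (DiscretePoints α) := ⊥

end ConfigPrelude


/-!
Over a neighbourhood `U` of `q` we build homeomorphisms `Θ c` of `A × ℝ`, depending continuously
on `c ∈ U`, with `Θ c (c i) = q i` and supported in the open slab `|t| < k`; then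
`x ↦ (π x, Θ (π x) (last point of x))` trivializes the projection over `U`.

`Θ c` is a product of point pushes supported in pairwise disjoint neighbourhoods of the `q i`.
In a chart around `q i` the push moving `w` to `z` is `x ↦ x + bump x • (z - w)` with a
piecewise linear bump of slope `1 / r`: as `dist w z < r`, the perturbation is a contraction,
which makes the push bijective with an inverse jointly continuous in `w` and the point.
-/
open Function Set Metric Filter Topology Equiv

noncomputable section BumpShift

section Bump

variable {X : Type*} [PseudoMetricSpace X] {z x y : X} {r : ℝ}

def bump (z : X) (r : ℝ) (x : X) : ℝ := max 0 (min 1 ((2 * r - dist x z) / r))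

lemma bump_nonneg : 0 ≤ bump z r x := le_max_left _ _

lemma bump_le_one : bump z r x ≤ 1 := max_le zero_le_one (min_le_left _ _)

lemma bump_of_le_dist (hr : 0 < r) (h : 2 * r ≤ dist x z) : bump z r x = 0 :=
  max_eq_left <| (min_le_right _ _).trans (div_nonpos_of_nonpos_of_nonneg (by linarith) hr.le)

lemma bump_of_dist_le (hr : 0 < r) (h : dist x z ≤ r) : bump z r x = 1 := by
  have : 1 ≤ (2 * r - dist x z) / r := by rw [le_div_iff₀ hr]; linarith
  simp [bump, min_eq_left this]

lemma abs_bump_sub_bump_le (hr : 0 < r) : |bump z r x - bump z r y| ≤ dist x y / r := by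
  calc |bump z r x - bump z r y|
      ≤ |min 1 ((2 * r - dist x z) / r) - min 1 ((2 * r - dist y z) / r)| := by
        rw [bump, bump, max_comm 0, max_comm 0]; exact abs_max_sub_max_le_abs _ _ _
    _ ≤ |(2 * r - dist x z) / r - (2 * r - dist y z) / r| := by
        simpa using abs_min_sub_min_le_max (1 : ℝ) ((2 * r - dist x z) / r) 1 _
    _ = |dist y z - dist x z| / r := by
        rw [div_sub_div_same, abs_div, abs_of_pos hr]; ring_nf
    _ ≤ dist x y / r := by
        gcongr; simpa [dist_comm] using abs_dist_sub_le y x z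

lemma continuous_bump : Continuous (bump z r) := by unfold bump; fun_prop

end Bump

variable {V : Type*} [NormedAddCommGroup V] [NormedSpace ℝ V] {z w w' x y : V} {r : ℝ}

def bumpShift (z : V) (r : ℝ) (w x : V) : V := x + bump z r x • (z - w)

lemma continuous_bumpShift : Continuous fun p : V × V => bumpShift z r p.1 p.2 := by
  have := continuous_bump (z := z) (r := r)
  unfold bumpShift; fun_prop

lemma bumpShift_of_le_dist (hr : 0 < r) (h : 2 * r ≤ dist x z) : bumpShift z r w x = x := by
  simp [bumpShift, bump_of_le_dist hr h]

lemma bumpShift_self (hw : dist w z < r) : bumpShift z r w w = z := by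
  simp [bumpShift, bump_of_dist_le (dist_nonneg.trans_lt hw) hw.le]

lemma dist_bumpShift_bumpShift_le :
    dist (bumpShift z r w x) (bumpShift z r w' x) ≤ dist w w' := by
  calc dist (bumpShift z r w x) (bumpShift z r w' x) = bump z r x * ‖w' - w‖ := by
        rw [dist_eq_norm, bumpShift, bumpShift, add_sub_add_left_eq_sub, ← smul_sub,
          sub_sub_sub_cancel_left, norm_smul, Real.norm_of_nonneg bump_nonneg]
    _ ≤ 1 * ‖w' - w‖ := by gcongr; exact bump_le_one
    _ = dist w w' := by rw [one_mul, dist_comm, dist_eq_norm]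

lemma norm_bump_sub_bump_smul_le (hr : 0 < r) :
    ‖(bump z r x - bump z r y) • (z - w)‖ ≤ dist w z / r * dist x y := by
  rw [norm_smul, Real.norm_eq_abs, ← dist_eq_norm, dist_comm z]
  calc |bump z r x - bump z r y| * dist w z ≤ dist x y / r * dist w z := by
        gcongr; exact abs_bump_sub_bump_le hr
    _ = dist w z / r * dist x y := by ring

lemma dist_le_dist_bumpShift (hr : 0 < r) :
    (1 - dist w z / r) * dist x y ≤ dist (bumpShift z r w x) (bumpShift z r w y) := by
  have e : bumpShift z r w x - bumpShift z r w y =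
      (x - y) + (bump z r x - bump z r y) • (z - w) := by
    simp only [bumpShift, sub_smul]; abel
  have := norm_sub_norm_le (x - y) (-((bump z r x - bump z r y) • (z - w)))
  rw [sub_neg_eq_add, norm_neg, ← e] at this
  have hb := norm_bump_sub_bump_smul_le (z := z) (x := x) (y := y) (w := w) hr
  rw [dist_eq_norm x] at hb ⊢
  rw [dist_eq_norm (bumpShift z r w x), sub_mul, one_mul]
  linarith

lemma bumpShift_injective (hw : dist w z < r) : Injective (bumpShift z r w) := by
  intro x y hxy
  have hr := dist_nonneg.trans_lt hw
  have h := dist_le_dist_bumpShift (z := z) (w := w) (x := x) (y := y) hr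
  rw [hxy, dist_self] at h
  have : 0 < 1 - dist w z / r := by rw [sub_pos, div_lt_one hr]; exact hw
  exact dist_le_zero.mp (nonpos_of_mul_nonpos_right h this)

/-- `bumpShift z r w x = y` iff `x` is a fixed point of the contraction
`x ↦ y - bump z r x • (z - w)`. -/
lemma bumpShift_surjective [CompleteSpace V] (hw : dist w z < r) :
    Surjective (bumpShift z r w) := by
  intro y
  have hr := dist_nonneg.trans_lt hw
  let L : NNReal := ⟨dist w z / r, div_nonneg dist_nonneg hr.le⟩
  have hcon : ContractingWith L fun x => y - bump z r x • (z - w) := by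
    refine ⟨by rw [← NNReal.coe_lt_one]; exact (div_lt_one hr).2 hw,
      LipschitzWith.of_dist_le_mul fun a b => ?_⟩
    rw [dist_eq_norm, sub_sub_sub_cancel_left, ← sub_smul, ← norm_neg, ← neg_smul, neg_sub]
    exact norm_bump_sub_bump_smul_le hr
  obtain ⟨x, hx, -⟩ := hcon.exists_fixedPoint y (edist_ne_top _ _)
  exact ⟨x, by rw [bumpShift]; nth_rewrite 1 [← hx.eq]; abel⟩

end BumpShift

structure IsContinuousPermFamily {X M : Type*} [TopologicalSpace X] [TopologicalSpace M]
    (Φ : X → Perm M) : Prop where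
  continuous_apply : Continuous fun p : X × M => Φ p.1 p.2
  continuous_inv_apply : Continuous fun p : X × M => (Φ p.1)⁻¹ p.2

namespace IsContinuousPermFamily

variable {X Y M : Type*} [TopologicalSpace X] [TopologicalSpace Y] [TopologicalSpace M]
  {Φ Ψ : X → Perm M}

lemma inv (hΦ : IsContinuousPermFamily Φ) : IsContinuousPermFamily fun x => (Φ x)⁻¹ :=
  ⟨hΦ.continuous_inv_apply, by simpa using hΦ.continuous_apply⟩

lemma comp (hΦ : IsContinuousPermFamily Φ) {f : Y → X} (hf : Continuous f) :
    IsContinuousPermFamily (Φ ∘ f) :=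
  ⟨hΦ.continuous_apply.comp ((hf.comp continuous_fst).prodMk continuous_snd),
    hΦ.continuous_inv_apply.comp ((hf.comp continuous_fst).prodMk continuous_snd)⟩

lemma mul (hΦ : IsContinuousPermFamily Φ) (hΨ : IsContinuousPermFamily Ψ) :
    IsContinuousPermFamily fun x => Φ x * Ψ x :=
  ⟨hΦ.continuous_apply.comp (continuous_fst.prodMk hΨ.continuous_apply),
    by simp only [mul_inv_rev, Perm.mul_apply]
       exact hΨ.continuous_inv_apply.comp (continuous_fst.prodMk hΦ.continuous_inv_apply)⟩

lemma list_prod_ofFn {k : ℕ} {Φ : Fin k → X → Perm M}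
    (hΦ : ∀ i, IsContinuousPermFamily (Φ i)) :
    IsContinuousPermFamily fun x => (List.ofFn fun i => Φ i x).prod := by
  induction k with
  | zero => exact ⟨continuous_snd, continuous_snd⟩
  | succ k ih =>
    simp only [List.ofFn_succ, List.prod_cons]
    exact (hΦ 0).mul (ih fun i => hΦ i.succ)

end IsContinuousPermFamily

section BumpShiftPerm

variable {V : Type*} [NormedAddCommGroup V] [NormedSpace ℝ V] [CompleteSpace V] {z : V} {r : ℝ}

noncomputable def bumpShiftPerm (z : V) (r : ℝ) (w : ball z r) : Perm V :=
  Equiv.ofBijective (bumpShift z r w) ⟨bumpShift_injective w.2, bumpShift_surjective w.2⟩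

@[simp]
lemma bumpShiftPerm_apply (w : ball z r) (x : V) : bumpShiftPerm z r w x = bumpShift z r w x :=
  rfl

lemma dist_bumpShiftPerm_inv_le (w w' : ball z r) (y y' : V) :
    dist ((bumpShiftPerm z r w)⁻¹ y) ((bumpShiftPerm z r w')⁻¹ y')
      ≤ (dist y y' + dist w w') / (1 - dist (w : V) z / r) := by
  have hr : 0 < r := dist_nonneg.trans_lt w.2
  have hc : 0 < 1 - dist (w : V) z / r := by rw [sub_pos, div_lt_one hr]; exact w.2
  set a := (bumpShiftPerm z r w)⁻¹ y
  set b := (bumpShiftPerm z r w')⁻¹ y'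
  have ha : bumpShift z r w a = y := (bumpShiftPerm z r w).apply_symm_apply y
  have hb : bumpShift z r w' b = y' := (bumpShiftPerm z r w').apply_symm_apply y'
  rw [le_div_iff₀ hc, mul_comm]
  calc (1 - dist (w : V) z / r) * dist a b ≤ dist (bumpShift z r w a) (bumpShift z r w b) :=
        dist_le_dist_bumpShift hr
    _ ≤ dist y y' + dist (bumpShift z r w' b) (bumpShift z r w b) := by
        rw [ha, ← hb]; exact dist_triangle _ _ _
    _ ≤ dist y y' + dist w w' := by
        gcongr; rw [dist_comm]; exact dist_bumpShift_bumpShift_le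

lemma isContinuousPermFamily_bumpShiftPerm : IsContinuousPermFamily (bumpShiftPerm z r) := by
  refine ⟨continuous_bumpShift.comp ((continuous_subtype_val.comp continuous_fst).prodMk
    continuous_snd), continuous_iff_continuousAt.2 fun p₀ => ?_⟩
  have hc : 0 < 1 - dist (p₀.1 : V) z / r := by
    rw [sub_pos, div_lt_one (dist_nonneg.trans_lt p₀.1.2)]; exact p₀.1.2
  rw [ContinuousAt, tendsto_iff_dist_tendsto_zero]
  refine squeeze_zero (fun _ => dist_nonneg) (fun p => ?_) (g := fun p : ball z r × V =>
    (dist p₀.2 p.2 + dist p₀.1 p.1) / (1 - dist (p₀.1 : V) z / r)) ?_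
  · rw [dist_comm]; exact dist_bumpShiftPerm_inv_le _ _ _ _
  · have : Continuous fun p : ball z r × V =>
        (dist p₀.2 p.2 + dist p₀.1 p.1) / (1 - dist (p₀.1 : V) z / r) := by fun_prop
    simpa using this.tendsto p₀

end BumpShiftPerm

section Support

variable {M : Type*} {S T : Set M} {φ : Perm M} {p : M}

lemma Equiv.Perm.apply_mem_iff_of_subset (hφ : ∀ p ∉ S, φ p = p) (hST : S ⊆ T) :
    φ p ∈ T ↔ p ∈ T := by
  by_cases hp : p ∈ S
  · refine iff_of_true (hST ?_) (hST hp)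
    by_contra h
    exact h (by rw [φ.injective (hφ _ h)]; exact hp)
  · rw [hφ p hp]

lemma Equiv.Perm.inv_apply_eq_self_of_notMem (hφ : ∀ p ∉ S, φ p = p) (hp : p ∉ S) :
    φ⁻¹ p = p := by
  rw [Perm.inv_eq_iff_eq, hφ p hp]

lemma Equiv.Perm.list_prod_ofFn_apply_of_forall_notMem {k : ℕ} {φ : Fin k → Perm M}
    {S : Fin k → Set M} (hφ : ∀ i, ∀ p ∉ S i, φ i p = p) (hp : ∀ i, p ∉ S i) :
    (List.ofFn φ).prod p = p := by
  induction k with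
  | zero => rfl
  | succ k ih =>
    rw [List.ofFn_succ, List.prod_cons, Perm.mul_apply,
      ih (fun i => hφ i.succ) (fun i => hp i.succ), hφ 0 p (hp 0)]

lemma Equiv.Perm.list_prod_ofFn_apply_of_mem {k : ℕ} {φ : Fin k → Perm M} {S : Fin k → Set M}
    (hS : Pairwise (_root_.Disjoint on S)) (hφ : ∀ i, ∀ p ∉ S i, φ i p = p) {i : Fin k}
    (hp : p ∈ S i) : (List.ofFn φ).prod p = φ i p := by
  induction k with
  | zero => exact i.elim0
  | succ k ih =>
    rw [List.ofFn_succ, List.prod_cons, Perm.mul_apply]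
    cases i using Fin.cases with
    | zero =>
      rw [list_prod_ofFn_apply_of_forall_notMem (fun j => hφ j.succ)
        fun j => (hS (Fin.succ_ne_zero j).symm).notMem_of_mem_left hp]
    | succ i =>
      rw [ih (hS.comp_of_injective (Fin.succ_injective _)) (fun j => hφ j.succ) hp]
      have : φ i.succ p ∈ S i.succ := ((apply_mem_iff_of_subset (hφ _) le_rfl).2 hp)
      exact hφ 0 _ ((hS (Fin.succ_ne_zero i)).notMem_of_mem_left this)

end Support

namespace OpenPartialHomeomorph

variable {M V : Type*} [TopologicalSpace M] [TopologicalSpace V] (ψ : OpenPartialHomeomorph M V)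
  {K : Set V}

open Classical in
noncomputable def conjFun (f : V → V) (p : M) : M :=
  if p ∈ ψ.source then ψ.symm (f (ψ p)) else p

lemma conjFun_conjFun {f g : V → V} (hg : MapsTo g ψ.target ψ.target) (p : M) :
    ψ.conjFun f (ψ.conjFun g p) = ψ.conjFun (f ∘ g) p := by
  by_cases hp : p ∈ ψ.source
  · have hg' := hg (ψ.map_source hp)
    simp [conjFun, hp, ψ.map_target hg', ψ.right_inv hg']
  · simp [conjFun, hp]

lemma conjFun_id (p : M) : ψ.conjFun id p = p := by
  by_cases hp : p ∈ ψ.source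
  · simp [conjFun, hp, ψ.left_inv hp]
  · simp [conjFun, hp]

lemma conjFun_of_notMem_image {f : V → V} (hf : ∀ v ∉ K, f v = v) {p : M}
    (hp : p ∉ ψ.symm '' K) : ψ.conjFun f p = p := by
  by_cases hps : p ∈ ψ.source
  · have : ψ p ∉ K := fun h => hp ⟨ψ p, h, ψ.left_inv hps⟩
    simp [conjFun, hps, hf _ this, ψ.left_inv hps]
  · simp [conjFun, hps]

noncomputable def conjPerm (hK : K ⊆ ψ.target) (φ : Perm V) (hφ : ∀ v ∉ K, φ v = v) :
    Perm M where
  toFun := ψ.conjFun φ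
  invFun := ψ.conjFun ⇑φ⁻¹
  left_inv p := by
    rw [conjFun_conjFun _ fun v hv => (φ.apply_mem_iff_of_subset hφ hK).2 hv]
    rw [← Perm.coe_mul, inv_mul_cancel, Perm.coe_one, conjFun_id]
  right_inv p := by
    rw [conjFun_conjFun _ fun v hv =>
      (φ⁻¹.apply_mem_iff_of_subset (fun _ => φ.inv_apply_eq_self_of_notMem hφ) hK).2 hv]
    rw [← Perm.coe_mul, mul_inv_cancel, Perm.coe_one, conjFun_id]

variable {X : Type*} [TopologicalSpace X]

lemma continuous_conjFun [T2Space M] {Φ : X → Perm V}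
    (hΦ : Continuous fun p : X × V => Φ p.1 p.2) (hK : IsCompact K) (hKt : K ⊆ ψ.target)
    (hfix : ∀ x, ∀ v ∉ K, Φ x v = v) :
    Continuous fun p : X × M => ψ.conjFun (Φ p.1) p.2 := by
  refine continuous_iff_continuousAt.2 fun ⟨x₀, p₀⟩ => ?_
  by_cases hp₀ : p₀ ∈ ψ.source
  · have hmem : Φ x₀ (ψ p₀) ∈ ψ.target :=
      ((Φ x₀).apply_mem_iff_of_subset (hfix x₀) hKt).2 (ψ.map_source hp₀)
    have hconj : ContinuousAt (fun p : X × M => ψ.symm (Φ p.1 (ψ p.2))) (x₀, p₀) :=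
      (ψ.continuousAt_symm hmem).comp (f := fun p : X × M => Φ p.1 (ψ p.2)) <|
        hΦ.continuousAt.comp (f := fun p : X × M => (p.1, ψ p.2)) <|
          continuousAt_fst.prodMk ((ψ.continuousAt hp₀).comp (f := Prod.snd) continuousAt_snd)
    refine hconj.congr ?_
    filter_upwards [(ψ.open_source.preimage continuous_snd).mem_nhds hp₀] with p hp
    exact (if_pos hp).symm
  · have hclosed : IsClosed (ψ.symm '' K) :=
      (hK.image_of_continuousOn (ψ.continuousOn_symm.mono hKt)).isClosed
    have hp₀K : p₀ ∉ ψ.symm '' K := fun ⟨v, hv, hvp⟩ =>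
      hp₀ (hvp ▸ ψ.map_target (hKt hv))
    refine continuousAt_snd.congr ?_
    filter_upwards [(hclosed.isOpen_compl.preimage continuous_snd).mem_nhds hp₀K] with p hp
    exact (ψ.conjFun_of_notMem_image (hfix p.1) hp).symm

lemma isContinuousPermFamily_conjPerm [T2Space M] {Φ : X → Perm V}
    (hΦ : IsContinuousPermFamily Φ) (hK : IsCompact K) (hKt : K ⊆ ψ.target)
    (hfix : ∀ x, ∀ v ∉ K, Φ x v = v) :
    IsContinuousPermFamily fun x => ψ.conjPerm hKt (Φ x) (hfix x) :=
  ⟨ψ.continuous_conjFun hΦ.continuous_apply hK hKt hfix,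
    ψ.continuous_conjFun hΦ.inv.continuous_apply hK hKt
      fun x _ hv => (Φ x).inv_apply_eq_self_of_notMem (hfix x) hv⟩

end OpenPartialHomeomorph

theorem exists_isContinuousPermFamily_push {M V : Type*} [TopologicalSpace M] [T2Space M]
    [NormedAddCommGroup V] [NormedSpace ℝ V] [ProperSpace V] (ψ : OpenPartialHomeomorph M V)
    {p : M} (hp : p ∈ ψ.source) {N : Set M} (hN : N ∈ 𝓝 p) :
    ∃ O : Set M, IsOpen O ∧ p ∈ O ∧ O ⊆ N ∧
      ∃ Φ : O → Perm M, IsContinuousPermFamily Φ ∧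
        (∀ c : O, Φ c c = p) ∧ ∀ c, ∀ x ∉ N, Φ c x = x := by
  set z := ψ p
  have hz : z ∈ ψ.target := ψ.map_source hp
  have hzN : ψ.target ∩ ψ.symm ⁻¹' N ∈ 𝓝 z :=
    inter_mem (ψ.open_target.mem_nhds hz)
      ((ψ.continuousAt_symm hz).preimage_mem_nhds (by rwa [ψ.left_inv hp]))
  obtain ⟨ε, hε, hεN⟩ := nhds_basis_closedBall.mem_iff.1 hzN
  set r := ε / 2
  have hr : 0 < r := half_pos hε
  set K := closedBall z (2 * r)
  have hKε : K = closedBall z ε := by simp only [K, r, mul_div_cancel₀ ε two_ne_zero]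
  have hK : K ⊆ ψ.target := fun v hv => (hεN (hKε ▸ hv)).1
  have hKN : ψ.symm '' K ⊆ N := image_subset_iff.2 fun v hv => (hεN (hKε ▸ hv)).2
  set O := ψ.source ∩ ψ ⁻¹' ball z r
  have hball : ∀ c : O, ψ c ∈ ball z r := fun c => c.2.2
  have hfix : ∀ c : O, ∀ v ∉ K, bumpShiftPerm z r ⟨ψ c, hball c⟩ v = v := fun c v hv =>
    bumpShift_of_le_dist hr (le_of_lt (not_le.1 hv))
  refine ⟨O, ψ.isOpen_inter_preimage isOpen_ball, ⟨hp, mem_ball_self hr⟩, fun c hc => ?_,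
    fun c => ψ.conjPerm hK _ (hfix c), ψ.isContinuousPermFamily_conjPerm
      (isContinuousPermFamily_bumpShiftPerm.comp ?_) (isCompact_closedBall z _) hK hfix,
    fun c => ?_, fun c x hx => ψ.conjFun_of_notMem_image (hfix c) fun h => hx (hKN h)⟩
  · have hcK : ψ c ∈ K :=
      ball_subset_closedBall.trans (closedBall_subset_closedBall (by linarith)) hc.2
    simpa [ψ.left_inv hc.1] using hKN (mem_image_of_mem ψ.symm hcK)
  · exact (ψ.continuousOn.comp_continuous continuous_subtype_val fun c => c.2.1).subtype_mk _
  · show ψ.conjFun _ c = p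
    simp [OpenPartialHomeomorph.conjFun, c.2.1, bumpShift_self (hball c), z, ψ.left_inv hp]

theorem exists_isContinuousPermFamily_pushConfig {M V : Type*} [TopologicalSpace M] [T2Space M]
    [NormedAddCommGroup V] [NormedSpace ℝ V] [ProperSpace V] {k : ℕ}
    (ψ : Fin k → OpenPartialHomeomorph M V) {q : Fin k → M} (hq : Injective q)
    (hqψ : ∀ i, q i ∈ (ψ i).source) {W : Set M} (hW : IsOpen W) (hqW : ∀ i, q i ∈ W) :
    ∃ U : Set (Fin k → M), IsOpen U ∧ q ∈ U ∧
      ∃ Θ : U → Perm M, IsContinuousPermFamily Θ ∧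
        (∀ c : U, ∀ i, Θ c (c.1 i) = q i) ∧ ∀ c, ∀ x ∉ W, Θ c x = x := by
  have hqd : Pairwise (Disjoint on fun i => 𝓝 (q i)) := fun i j hij =>
    disjoint_nhds_nhds.2 (hq.ne hij)
  obtain ⟨N, hN, hNd⟩ := hqd.exists_mem_filter_of_disjoint
  set S := fun i => N i ∩ W
  have hSd : Pairwise (Disjoint on S) := fun i j hij =>
    (hNd hij).mono inter_subset_left inter_subset_left
  choose O hO hqO hOS Φ hΦ hΦq hΦS using fun i =>
    exists_isContinuousPermFamily_push (ψ i) (hqψ i) (inter_mem (hN i) (hW.mem_nhds (hqW i)))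
  set U := univ.pi O
  let point (i : Fin k) (c : U) : O i := ⟨c.1 i, c.2 i (mem_univ i)⟩
  refine ⟨U, isOpen_set_pi finite_univ fun i _ => hO i, fun i _ => hqO i,
    fun c => (List.ofFn fun i => Φ i (point i c)).prod,
    IsContinuousPermFamily.list_prod_ofFn fun i => (hΦ i).comp ?_, fun c i => ?_,
    fun c x hx => Perm.list_prod_ofFn_apply_of_forall_notMem (fun i => hΦS i (point i c))
      fun i h => hx h.2⟩
  · exact ((continuous_apply i).comp continuous_subtype_val).subtype_mk _
  · rw [Perm.list_prod_ofFn_apply_of_mem hSd (fun i => hΦS i (point i c)) (hOS i (point i c).2)]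
    exact hΦq i (point i c)

namespace ConfigJ

variable {A : Type*} [TopologicalSpace A] {k : ℕ}

lemma continuous_val : Continuous fun c : ConfigJ A k => c.1 := continuous_subtype_val

def snoc (c : ConfigJ A k) (y : A × ℝ) (hy : |y.2| ≤ k) (hne : ∀ i, y ≠ c.1 i) :
    ConfigJ A (k + 1) :=
  ⟨Fin.snoc c.1 y, Fin.snoc_injective_of_injective c.2.1 fun ⟨i, hi⟩ => hne i hi.symm,
    Fin.lastCases (by simpa using hy) fun i => by simpa using c.2.2 i⟩

lemma configJProjLE_snoc (c : ConfigJ A k) (y : A × ℝ) (hy : |y.2| ≤ k)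
    (hne : ∀ i, y ≠ c.1 i) : configJProjLE A (Nat.le_succ k) (c.snoc y hy hne) = c :=
  Subtype.ext <| funext fun i => Fin.snoc_castSucc (α := fun _ => A × ℝ) y c.1 i

lemma continuous_snoc {X : Type*} [TopologicalSpace X] {c : X → ConfigJ A k} {y : X → A × ℝ}
    (hc : Continuous c) (hy : Continuous y) (hyk : ∀ x, |(y x).2| ≤ k)
    (hne : ∀ x i, y x ≠ (c x).1 i) : Continuous fun x => (c x).snoc (y x) (hyk x) (hne x) :=
  ((continuous_val.comp hc).finSnoc hy).subtype_mk _

@[simp]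
lemma snoc_last (c : ConfigJ A k) (y : A × ℝ) (hy : |y.2| ≤ k) (hne : ∀ i, y ≠ c.1 i) :
    (c.snoc y hy hne).1 (Fin.last k) = y :=
  Fin.snoc_last (α := fun _ => A × ℝ) y c.1

lemma abs_last_snd_le (x : ConfigJ A (k + 1)) : |(x.1 (Fin.last k)).2| ≤ k := by
  simpa using x.2.2 (Fin.last k)

lemma last_ne (x : ConfigJ A (k + 1)) (i : Fin k) :
    x.1 (Fin.last k) ≠ (configJProjLE A (Nat.le_succ k) x).1 i :=
  fun h => (Fin.castSucc_lt_last i).ne' (x.2.1 h)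

/-- The trivialization records the last point `y` of a configuration over `c` as `Θ c y`. -/
theorem exists_homeomorph_of_isContinuousPermFamily (q : ConfigJ A k) {U : Set (ConfigJ A k)}
    {Θ : U → Perm (A × ℝ)} (hΘ : IsContinuousPermFamily Θ)
    (hΘq : ∀ c : U, ∀ i, Θ c (c.1.1 i) = q.1 i)
    (hΘk : ∀ c y, |(Θ c y).2| ≤ k ↔ |y.2| ≤ k) :
    ∃ h : {x : ConfigJ A (k + 1) // configJProjLE A (Nat.le_succ k) x ∈ U} ≃ₜ
        (U × {y : A × ℝ // |y.2| ≤ (k : ℝ) ∧ ∀ i : Fin k, y ≠ q.1 i}),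
      ∀ x, ((h x).1 : ConfigJ A k) = configJProjLE A (Nat.le_succ k) x.1 := by
  let base (x : {x : ConfigJ A (k + 1) // configJProjLE A (Nat.le_succ k) x ∈ U}) : U :=
    ⟨_, x.2⟩
  have hbase : Continuous base :=
    ((configJProjLE A _).continuous.comp continuous_subtype_val).subtype_mk _
  have hlast : Continuous
      fun x : {x : ConfigJ A (k + 1) // configJProjLE A (Nat.le_succ k) x ∈ U} =>
        x.1.1 (Fin.last k) :=
    (continuous_apply _).comp (continuous_subtype_val.comp continuous_subtype_val)
  let newPoint (p : U × {y : A × ℝ // |y.2| ≤ (k : ℝ) ∧ ∀ i : Fin k, y ≠ q.1 i}) :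
      A × ℝ :=
    (Θ p.1)⁻¹ p.2.1
  have hΘnewPoint (p) : Θ p.1 (newPoint p) = p.2.1 := (Θ p.1).apply_symm_apply _
  have hnewPoint_le (p) : |(newPoint p).2| ≤ k := by
    rw [← hΘk p.1, hΘnewPoint]; exact p.2.2.1
  have hnewPoint_ne (p) (i) : newPoint p ≠ p.1.1.1 i := fun h =>
    p.2.2.2 i (by rw [← hΘq p.1 i, ← h, hΘnewPoint])
  let snoc' (p : U × {y : A × ℝ // |y.2| ≤ (k : ℝ) ∧ ∀ i : Fin k, y ≠ q.1 i}) :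
      ConfigJ A (k + 1) :=
    p.1.1.snoc (newPoint p) (hnewPoint_le p) (hnewPoint_ne p)
  have hsnoc'_mem (p) : configJProjLE A (Nat.le_succ k) (snoc' p) ∈ U := by
    rw [configJProjLE_snoc]; exact p.1.2
  have hsnoc' (p) : base ⟨snoc' p, hsnoc'_mem p⟩ = p.1 :=
    Subtype.ext (configJProjLE_snoc _ _ (hnewPoint_le p) (hnewPoint_ne p))
  have hsnoc'_cont : Continuous snoc' :=
    continuous_snoc (continuous_subtype_val.comp continuous_fst)
      (hΘ.continuous_inv_apply.comp (continuous_fst.prodMk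
        (continuous_subtype_val.comp continuous_snd))) _ _
  refine ⟨{
    toFun x := (base x, ⟨Θ (base x) (x.1.1 (Fin.last k)), (hΘk _ _).2 x.1.abs_last_snd_le,
      fun i h => x.1.last_ne i ((Θ (base x)).injective (h.trans (hΘq (base x) i).symm))⟩)
    invFun p := ⟨snoc' p, hsnoc'_mem p⟩
    left_inv x := by
      refine Subtype.ext (Subtype.ext ?_)
      simp only [snoc', snoc, newPoint, Perm.coe_inv, symm_apply_apply]
      exact Fin.snoc_init_self x.1.1
    right_inv p := by
      refine Prod.ext (hsnoc' p) (Subtype.ext ?_)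
      simp only [hsnoc', snoc', snoc_last]
      exact hΘnewPoint p
    continuous_toFun := hbase.prodMk <|
      (hΘ.continuous_apply.comp (hbase.prodMk hlast)).subtype_mk _
    continuous_invFun := hsnoc'_cont.subtype_mk hsnoc'_mem }, fun _ => rfl⟩

end ConfigJ

theorem stmt4_general {n : ℕ} (A : Type) [TopologicalSpace A] [T2Space A]
    [ChartedSpace (EuclideanSpace ℝ (Fin n)) A]
    (k : ℕ) (q : ConfigJ A k) :
    ∃ U : Set (ConfigJ A k), IsOpen U ∧ q ∈ U ∧
      ∃ h : {x : ConfigJ A (k + 1) // configJProjLE A (Nat.le_succ k) x ∈ U} ≃ₜ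
          (U × {y : A × ℝ // |y.2| ≤ (k : ℝ) ∧ ∀ i : Fin k, y ≠ q.1 i}),
        ∀ x, ((h x).1 : ConfigJ A k) = configJProjLE A (Nat.le_succ k) x.1 := by
  set W : Set (A × ℝ) := {y | |y.2| < k}
  have hW : IsOpen W := isOpen_lt (continuous_abs.comp continuous_snd) continuous_const
  have hqW (i : Fin k) : q.1 i ∈ W := (q.2.2 i).trans_lt (by exact_mod_cast i.2)
  obtain ⟨U, hU, hqU, Θ, hΘ, hΘq, hΘW⟩ := exists_isContinuousPermFamily_pushConfig
    (fun i => (chartAt (EuclideanSpace ℝ (Fin n)) (q.1 i).1).prod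
      (OpenPartialHomeomorph.refl ℝ)) q.2.1 (fun i => by simp) hW hqW
  let incl (c : (fun c : ConfigJ A k => c.1) ⁻¹' U) : U := ⟨c.1.1, c.2⟩
  have hincl : Continuous incl :=
    (ConfigJ.continuous_val.comp continuous_subtype_val).subtype_mk _
  exact ⟨_, hU.preimage continuous_subtype_val, hqU,
    ConfigJ.exists_homeomorph_of_isContinuousPermFamily q (hΘ.comp hincl) (fun c => hΘq (incl c))
      fun c y => (Θ (incl c)).apply_mem_iff_of_subset (T := {y : A × ℝ | |y.2| ≤ k})
        (hΘW (incl c)) fun y (hy : |y.2| < k) => show |y.2| ≤ k from hy.le⟩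

theorem stmt4 {n : ℕ} (A : Type) [TopologicalSpace A] [T2Space A] [SecondCountableTopology A] [Nonempty A]
    [ChartedSpace (EuclideanSpace ℝ (Fin n)) A] [IsManifold (𝓡 n) ((⊤ : ℕ∞) : WithTop ℕ∞) A]
    (k : ℕ) (hk : 1 ≤ k) (q : ConfigJ A k) :
    ∃ U : Set (ConfigJ A k), IsOpen U ∧ q ∈ U ∧
      ∃ h : {x : ConfigJ A (k + 1) // configJProjLE A (Nat.le_succ k) x ∈ U} ≃ₜ
          (U × {y : A × ℝ // |y.2| ≤ (k : ℝ) ∧ ∀ i : Fin k, y ≠ q.1 i}),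
        ∀ x, ((h x).1 : ConfigJ A k) = configJProjLE A (Nat.le_succ k) x.1 :=
  stmt4_general (n := n) A k q
end

section
/- Let A be a smooth n-manifold. Let D be the double mapping cylinder of the span (A × A) ← F₂(A) → (A × A), where both legs are the subspace inclusion F₂(A) ↪ A × A. Define Φ : D → F₂(A × ℝ) by sending the class of (a₁,a₂) in the first end copy of A × A to ((a₁,0),(a₂,−1)), the class of (a₁,a₂) in the second end copy to ((a₁,0),(a₂,1)), and the class of ((a₁,a₂),t) with (a₁,a₂) ∈ F₂(A), t ∈ [0,1], to ((a₁,0),(a₂,2t−1)). Then Φ is a well-defined continuous map and a homotopy equivalence. -/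
open scoped Manifold unitInterval

/-!
A metric on `A` (a manifold is metrizable) yields a homotopy inverse `Ψ` of `Φ`. For a
configuration `((a₁, t₁), (a₂, t₂))` put `d = t₂ - t₁` and rescale it to
`u = d / max |d| (min (dist a₁ a₂) 1) ∈ [-1, 1]` (the cut-off at `1` makes `u = d` at the two ends
of `D`, where `d = ∓1`). Off the diagonal of `A`, `Ψ` returns the cylinder
point `((a₁, a₂), (u + 1) / 2)`; over the diagonal, where `u = ±1`, it returns the corresponding end.
`Ψ` is continuous at the diagonal because `u` is already `±1` on the open set where
`|d| > min (dist a₁ a₂) 1`.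

`Φ ∘ Ψ` moves the two points vertically to heights `0` and `u`; over the diagonal `u` has the sign
of `d`, so the linear homotopy of heights never makes the points collide. `Ψ ∘ Φ` fixes the two
ends and only reparametrizes the cylinder coordinate, so sliding that coordinate back is a
homotopy to the identity.
-/

noncomputable section

namespace DblCyl

variable {W X Z Y : Type*} [TopologicalSpace W] [TopologicalSpace X] [TopologicalSpace Z]
  [TopologicalSpace Y] {f : W → X} {g : W → Z}

def left (x : X) : DblCyl f g := Quot.mk _ (Sum.inl x)

def right (z : Z) : DblCyl f g := Quot.mk _ (Sum.inr (Sum.inr z))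

def cyl (w : W) (t : I) : DblCyl f g := Quot.mk _ (Sum.inr (Sum.inl (w, t)))

theorem cyl_zero (w : W) : (cyl w 0 : DblCyl f g) = left (f w) :=
  (Quot.sound (DMCRel.zero w)).symm

theorem cyl_one (w : W) : (cyl w 1 : DblCyl f g) = right (g w) :=
  (Quot.sound (DMCRel.one w)).symm

theorem continuous_left : Continuous (left : X → DblCyl f g) :=
  continuous_quot_mk.comp continuous_inl

theorem continuous_right : Continuous (right : Z → DblCyl f g) :=
  continuous_quot_mk.comp (continuous_inr.comp continuous_inr)

theorem continuous_cyl : Continuous fun p : W × I => (cyl p.1 p.2 : DblCyl f g) :=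
  continuous_quot_mk.comp (continuous_inr.comp continuous_inl)

@[elab_as_elim]
theorem induction_on {P : DblCyl f g → Prop} (y : DblCyl f g) (left : ∀ x, P (left x))
    (cyl : ∀ w t, P (cyl w t)) (right : ∀ z, P (right z)) : P y := by
  induction y using Quot.ind with
  | mk a =>
    rcases a with x | ⟨⟨w, t⟩ | z⟩
    exacts [left x, cyl w t, right z]

def lift (l : C(X, Y)) (c : C(W × I, Y)) (r : C(Z, Y)) (hl : ∀ w, c (w, 0) = l (f w))
    (hr : ∀ w, c (w, 1) = r (g w)) : C(DblCyl f g, Y) where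
  toFun := Quot.lift (Sum.elim l (Sum.elim c r)) fun _ _ h => by
    cases h with
    | zero w => exact (hl w).symm
    | one w => exact (hr w).symm
  continuous_toFun := continuous_quot_lift _ <|
    l.continuous.sumElim (c.continuous.sumElim r.continuous)

section lift

variable (l : C(X, Y)) (c : C(W × I, Y)) (r : C(Z, Y)) (hl : ∀ w, c (w, 0) = l (f w))
  (hr : ∀ w, c (w, 1) = r (g w))

@[simp] theorem lift_left (x : X) : lift l c r hl hr (left x) = l x := rfl

@[simp] theorem lift_cyl (w : W) (t : I) : lift l c r hl hr (cyl w t) = c (w, t) := rfl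

@[simp] theorem lift_right (z : Z) : lift l c r hl hr (right z) = r z := rfl

end lift

theorem homotopic_id_of_reparam (F : C(DblCyl f g, DblCyl f g)) (τ : C(W × I, I))
    (hτ₀ : ∀ w, τ (w, 0) = 0) (hτ₁ : ∀ w, τ (w, 1) = 1)
    (hl : ∀ x, F (left x) = left x) (hr : ∀ z, F (right z) = right z)
    (hc : ∀ w t, F (cyl w t) = cyl w (τ (w, t))) :
    F.Homotopic (ContinuousMap.id _) := by
  let slide : C((W × I) × I, DblCyl f g) :=
    ⟨fun p => cyl p.1.1 (Set.Icc.convexComb (τ p.1) p.1.2 p.2),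
      continuous_cyl.comp <| continuous_fst.comp continuous_fst |>.prodMk <|
        Set.Icc.continuous_convexComb_prod.comp <|
          (τ.continuous.comp continuous_fst).prodMk <|
            (continuous_snd.comp continuous_fst).prodMk continuous_snd⟩
  let H : C(DblCyl f g, C(I, DblCyl f g)) :=
    lift (ContinuousMap.const'.comp ⟨left, continuous_left⟩) slide.curry
      (ContinuousMap.const'.comp ⟨right, continuous_right⟩)
      (fun w => by ext s; simp [slide, hτ₀, cyl_zero])
      (fun w => by ext s; simp [slide, hτ₁, cyl_one])
  refine ⟨⟨H.uncurry.comp ⟨Prod.swap, continuous_swap⟩, fun y => ?_, fun y => ?_⟩⟩ <;>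
    induction y using induction_on <;> simp [H, slide, hl, hr, hc]

end DblCyl

namespace Config

variable {M : Type*} [TopologicalSpace M]

theorem continuous_apply_val {k : ℕ} (i : Fin k) : Continuous fun x : Config M k => x.1 i :=
  (_root_.continuous_apply i).comp continuous_subtype_val

theorem continuous_apply_val_fst {N : Type*} [TopologicalSpace N] {k : ℕ} (i : Fin k) :
    Continuous fun x : Config (M × N) k => (x.1 i).1 :=
  continuous_fst.comp (continuous_apply_val i)

theorem apply_zero_ne_apply_one (x : Config M 2) : x.1 0 ≠ x.1 1 :=
  fun h => absurd (x.2 h) (by decide)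

theorem ext₂ {x y : Config M 2} (h₀ : x.1 0 = y.1 0) (h₁ : x.1 1 = y.1 1) : x = y :=
  Subtype.ext <| funext fun i => by fin_cases i <;> assumption

end Config

section config2

variable {M : Type*} [TopologicalSpace M]

@[simp] theorem config2_val_zero (p q : M) (h : p ≠ q) : (config2 p q h).1 0 = p := rfl

@[simp] theorem config2_val_one (p q : M) (h : p ≠ q) : (config2 p q h).1 1 = q := rfl

theorem Continuous.config2 {T : Type*} [TopologicalSpace T] {p q : T → M} (hp : Continuous p)
    (hq : Continuous q) (h : ∀ t, p t ≠ q t) :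
    Continuous fun t => _root_.config2 (p t) (q t) (h t) :=
  Continuous.subtype_mk (continuous_pi fun i => by fin_cases i <;> assumption) _

end config2

theorem one_sub_mul_add_mul_ne_zero {a b s : ℝ} (hab : 0 < a * b) (hs₀ : 0 ≤ s) (hs₁ : s ≤ 1) :
    (1 - s) * a + s * b ≠ 0 := by
  intro h
  have ha : 0 < a * a := mul_self_pos.2 (left_ne_zero_of_mul hab.ne')
  have hcomb : (1 - s) * (a * a) + s * (a * b) = 0 := by linear_combination a * h
  rcases hs₀.eq_or_lt with rfl | hs
  · linarith
  · nlinarith [mul_pos hs hab, mul_nonneg (sub_nonneg.2 hs₁) ha.le]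

namespace Config

variable {A : Type*} [TopologicalSpace A]

def heightDiff (x : Config (A × ℝ) 2) : ℝ := (x.1 1).2 - (x.1 0).2

theorem continuous_heightDiff : Continuous (heightDiff (A := A)) :=
  (continuous_snd.comp (continuous_apply_val 1)).sub (continuous_snd.comp (continuous_apply_val 0))

theorem heightDiff_ne_zero_of_fst_eq {x : Config (A × ℝ) 2} (h : (x.1 0).1 = (x.1 1).1) :
    heightDiff x ≠ 0 := fun h0 =>
  x.apply_zero_ne_apply_one (Prod.ext h (sub_eq_zero.mp h0).symm)

theorem heightDiff_neg_of_fst_eq_of_not_pos {x : Config (A × ℝ) 2} (hx : (x.1 0).1 = (x.1 1).1)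
    (h : ¬0 < heightDiff x) : heightDiff x < 0 :=
  (heightDiff_ne_zero_of_fst_eq hx).lt_of_le (not_lt.1 h)

theorem homotopic_of_fst_eq {X : Type*} [TopologicalSpace X] (φ ψ : C(X, Config (A × ℝ) 2))
    (hfst : ∀ x i, ((φ x).1 i).1 = ((ψ x).1 i).1)
    (hsign : ∀ x, ((φ x).1 0).1 = ((φ x).1 1).1 → 0 < heightDiff (φ x) * heightDiff (ψ x)) :
    φ.Homotopic ψ := by
  let height (i : Fin 2) (p : I × X) : ℝ := (1 - p.1) * ((φ p.2).1 i).2 + p.1 * ((ψ p.2).1 i).2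
  have hheight (i : Fin 2) : Continuous (height i) :=
    ((continuous_const.sub (continuous_subtype_val.comp continuous_fst)).mul
      (continuous_snd.comp ((continuous_apply_val i).comp (φ.continuous.comp continuous_snd)))).add
    ((continuous_subtype_val.comp continuous_fst).mul
      (continuous_snd.comp ((continuous_apply_val i).comp (ψ.continuous.comp continuous_snd))))
  have hne (p : I × X) : (((φ p.2).1 0).1, height 0 p) ≠ (((φ p.2).1 1).1, height 1 p) := by
    intro h
    refine one_sub_mul_add_mul_ne_zero (hsign p.2 (Prod.ext_iff.1 h).1) p.1.2.1 p.1.2.2 ?_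
    have := (Prod.ext_iff.1 h).2
    simp only [height] at this
    unfold heightDiff
    linear_combination -this
  refine ⟨⟨⟨fun p => config2 _ _ (hne p), ?_⟩, fun x => ?_, fun x => ?_⟩⟩
  · exact (((continuous_apply_val_fst 0).comp (φ.continuous.comp continuous_snd)).prodMk
      (hheight 0)).config2
      (((continuous_apply_val_fst 1).comp (φ.continuous.comp continuous_snd)).prodMk (hheight 1)) _
  · exact ext₂ (by simp [height]) (by simp [height])
  · exact ext₂ (Prod.ext (hfst x 0) (by simp [height])) (Prod.ext (hfst x 1) (by simp [height]))

end Config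

namespace Config

variable {A : Type*} [MetricSpace A]

def horizDist (x : Config (A × ℝ) 2) : ℝ := min (dist (x.1 0).1 (x.1 1).1) 1

def relHeight (x : Config (A × ℝ) 2) : ℝ := heightDiff x / max |heightDiff x| (horizDist x)

theorem horizDist_nonneg (x : Config (A × ℝ) 2) : 0 ≤ horizDist x :=
  le_min dist_nonneg zero_le_one

theorem horizDist_le_one (x : Config (A × ℝ) 2) : horizDist x ≤ 1 := min_le_right _ _

theorem horizDist_eq_zero_of_fst_eq {x : Config (A × ℝ) 2} (h : (x.1 0).1 = (x.1 1).1) :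
    horizDist x = 0 := by
  simp [horizDist, h]

theorem continuous_horizDist : Continuous (horizDist (A := A)) :=
  (((continuous_fst.comp (continuous_apply_val 0)).dist
    (continuous_fst.comp (continuous_apply_val 1)))).min continuous_const

theorem max_abs_heightDiff_horizDist_pos (x : Config (A × ℝ) 2) :
    0 < max |heightDiff x| (horizDist x) := by
  by_cases h : (x.1 0).1 = (x.1 1).1
  · exact lt_max_of_lt_left (abs_pos.2 (heightDiff_ne_zero_of_fst_eq h))
  · exact lt_max_of_lt_right (lt_min (dist_pos.2 h) one_pos)

theorem continuous_relHeight : Continuous (relHeight (A := A)) :=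
  continuous_heightDiff.div (continuous_heightDiff.abs.max continuous_horizDist)
    fun x => (max_abs_heightDiff_horizDist_pos x).ne'

theorem abs_relHeight_le_one (x : Config (A × ℝ) 2) : |relHeight x| ≤ 1 := by
  rw [relHeight, abs_div, abs_of_pos (max_abs_heightDiff_horizDist_pos x)]
  exact div_le_one_of_le₀ (le_max_left _ _) (max_abs_heightDiff_horizDist_pos x).le

theorem relHeight_eq_one {x : Config (A × ℝ) 2} (h₀ : 0 < heightDiff x)
    (h : horizDist x ≤ heightDiff x) : relHeight x = 1 := by
  rw [relHeight, abs_of_pos h₀, max_eq_left h, div_self h₀.ne']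

theorem relHeight_eq_neg_one {x : Config (A × ℝ) 2} (h₀ : heightDiff x < 0)
    (h : horizDist x ≤ -heightDiff x) : relHeight x = -1 := by
  rw [relHeight, abs_of_neg h₀, max_eq_left h, div_neg, div_self h₀.ne]

theorem relHeight_eq_one_of_fst_eq {x : Config (A × ℝ) 2} (hx : (x.1 0).1 = (x.1 1).1)
    (h₀ : 0 < heightDiff x) : relHeight x = 1 :=
  relHeight_eq_one h₀ (by rw [horizDist_eq_zero_of_fst_eq hx]; exact h₀.le)

theorem relHeight_eq_neg_one_of_fst_eq {x : Config (A × ℝ) 2} (hx : (x.1 0).1 = (x.1 1).1)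
    (h₀ : heightDiff x < 0) : relHeight x = -1 :=
  relHeight_eq_neg_one h₀ (by rw [horizDist_eq_zero_of_fst_eq hx]; linarith)

theorem heightDiff_mul_relHeight_pos {x : Config (A × ℝ) 2} (hx : (x.1 0).1 = (x.1 1).1) :
    0 < heightDiff x * relHeight x := by
  rcases (heightDiff_ne_zero_of_fst_eq hx).lt_or_gt with hneg | hpos
  · rw [relHeight_eq_neg_one_of_fst_eq hx hneg]
    linarith
  · rw [relHeight_eq_one_of_fst_eq hx hpos]
    linarith

def cylCoord (x : Config (A × ℝ) 2) : I :=
  ⟨(relHeight x + 1) / 2, by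
    have := abs_le.1 (abs_relHeight_le_one x)
    constructor <;> linarith⟩

theorem continuous_cylCoord : Continuous (cylCoord (A := A)) :=
  Continuous.subtype_mk ((continuous_relHeight.add continuous_const).div_const 2) _

theorem cylCoord_of_relHeight_eq_one {x : Config (A × ℝ) 2} (h : relHeight x = 1) :
    cylCoord x = 1 :=
  Subtype.ext (by simp [cylCoord, h])

theorem cylCoord_of_relHeight_eq_neg_one {x : Config (A × ℝ) 2} (h : relHeight x = -1) :
    cylCoord x = 0 :=
  Subtype.ext (by simp [cylCoord, h])

end Config

section Phi

abbrev ConfigDblCyl (A : Type*) [TopologicalSpace A] : Type _ :=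
  DblCyl (fun w : Config A 2 => (w.1 0, w.1 1)) (fun w : Config A 2 => (w.1 0, w.1 1))

def dblCylToConfig (A : Type*) [TopologicalSpace A] : C(ConfigDblCyl A, Config (A × ℝ) 2) :=
  DblCyl.lift
    ⟨fun p => config2 (p.1, 0) (p.2, -1) (by simp),
      (continuous_fst.prodMk continuous_const).config2 (continuous_snd.prodMk continuous_const) _⟩
    ⟨fun q => config2 (q.1.1 0, 0) (q.1.1 1, 2 * q.2 - 1)
        fun h => q.1.apply_zero_ne_apply_one (Prod.ext_iff.1 h).1,
      (((Config.continuous_apply_val 0).comp continuous_fst).prodMk continuous_const).config2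
        (((Config.continuous_apply_val 1).comp continuous_fst).prodMk
          ((continuous_const.mul (continuous_subtype_val.comp continuous_snd)).sub
            continuous_const)) _⟩
    ⟨fun p => config2 (p.1, 0) (p.2, 1) (by simp),
      (continuous_fst.prodMk continuous_const).config2 (continuous_snd.prodMk continuous_const) _⟩
    (fun w => Config.ext₂ rfl (by simp))
    (fun w => Config.ext₂ rfl (by norm_num))

variable (A : Type*) [TopologicalSpace A]

@[simp] theorem dblCylToConfig_left (p : A × A) :
    dblCylToConfig A (DblCyl.left p) = config2 (p.1, 0) (p.2, -1) (by simp) := rfl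

@[simp] theorem dblCylToConfig_cyl (w : Config A 2) (t : I) :
    dblCylToConfig A (DblCyl.cyl w t) = config2 (w.1 0, 0) (w.1 1, 2 * (t : ℝ) - 1)
      (fun h => w.apply_zero_ne_apply_one (Prod.ext_iff.1 h).1) := rfl

@[simp] theorem dblCylToConfig_right (p : A × A) :
    dblCylToConfig A (DblCyl.right p) = config2 (p.1, 0) (p.2, 1) (by simp) := rfl

end Phi

section Psi

variable {A : Type*} [MetricSpace A]

open Config Topology

def configToDblCylFun (x : Config (A × ℝ) 2) : ConfigDblCyl A :=
  open scoped Classical in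
  if h : (x.1 0).1 = (x.1 1).1 then
    if 0 < heightDiff x then DblCyl.right ((x.1 0).1, (x.1 1).1)
    else DblCyl.left ((x.1 0).1, (x.1 1).1)
  else DblCyl.cyl (config2 _ _ h) (cylCoord x)

theorem configToDblCylFun_eq_right {x : Config (A × ℝ) 2} (h : relHeight x = 1) :
    configToDblCylFun x = DblCyl.right ((x.1 0).1, (x.1 1).1) := by
  unfold configToDblCylFun
  split_ifs with hx hpos
  · rfl
  · rw [relHeight_eq_neg_one_of_fst_eq hx (heightDiff_neg_of_fst_eq_of_not_pos hx hpos)] at h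
    norm_num at h
  · rw [cylCoord_of_relHeight_eq_one h, DblCyl.cyl_one]
    rfl

theorem configToDblCylFun_eq_left {x : Config (A × ℝ) 2} (h : relHeight x = -1) :
    configToDblCylFun x = DblCyl.left ((x.1 0).1, (x.1 1).1) := by
  unfold configToDblCylFun
  split_ifs with hx hpos
  · rw [relHeight_eq_one_of_fst_eq hx hpos] at h
    norm_num at h
  · rfl
  · rw [cylCoord_of_relHeight_eq_neg_one h, DblCyl.cyl_zero]
    rfl

theorem continuousAt_configToDblCylFun_of_fst_eq {x : Config (A × ℝ) 2}
    (hx : (x.1 0).1 = (x.1 1).1) : ContinuousAt configToDblCylFun x := by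
  have hpair : Continuous fun y : Config (A × ℝ) 2 => ((y.1 0).1, (y.1 1).1) :=
    (continuous_apply_val_fst 0).prodMk (continuous_apply_val_fst 1)
  have hx₀ := horizDist_eq_zero_of_fst_eq hx
  rcases (heightDiff_ne_zero_of_fst_eq hx).lt_or_gt with hneg | hpos
  · have hU : {y | horizDist y < -heightDiff y} ∈ 𝓝 x :=
      (isOpen_lt continuous_horizDist continuous_heightDiff.neg).mem_nhds
        (by simpa [hx₀] using hneg)
    refine (DblCyl.continuous_left.comp hpair).continuousAt.congr ?_
    filter_upwards [hU] with y hy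
    exact (configToDblCylFun_eq_left
      (relHeight_eq_neg_one (by linarith [horizDist_nonneg y]) hy.le)).symm
  · have hU : {y | horizDist y < heightDiff y} ∈ 𝓝 x :=
      (isOpen_lt continuous_horizDist continuous_heightDiff).mem_nhds (by simpa [hx₀] using hpos)
    refine (DblCyl.continuous_right.comp hpair).continuousAt.congr ?_
    filter_upwards [hU] with y hy
    exact (configToDblCylFun_eq_right
      (relHeight_eq_one (by linarith [horizDist_nonneg y]) hy.le)).symm

theorem continuousAt_configToDblCylFun_of_fst_ne {x : Config (A × ℝ) 2}
    (hx : (x.1 0).1 ≠ (x.1 1).1) : ContinuousAt configToDblCylFun x := by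
  let U := {y : Config (A × ℝ) 2 | (y.1 0).1 ≠ (y.1 1).1}
  have hU : IsOpen U := isOpen_ne_fun (continuous_apply_val_fst 0) (continuous_apply_val_fst 1)
  refine (continuousOn_iff_continuous_domRestrict.2 ?_).continuousAt (hU.mem_nhds hx)
  have : U.domRestrict configToDblCylFun =
      fun y : U => DblCyl.cyl (config2 _ _ y.2) (cylCoord y.1) :=
    funext fun y => dif_neg y.2
  rw [this]
  exact DblCyl.continuous_cyl.comp <|
    (((continuous_apply_val_fst 0).comp continuous_subtype_val).config2
      ((continuous_apply_val_fst 1).comp continuous_subtype_val) fun y => y.2).prodMk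
      (continuous_cylCoord.comp continuous_subtype_val)

theorem continuous_configToDblCylFun : Continuous (configToDblCylFun (A := A)) :=
  continuous_iff_continuousAt.2 fun x =>
    (em ((x.1 0).1 = (x.1 1).1)).elim continuousAt_configToDblCylFun_of_fst_eq
      continuousAt_configToDblCylFun_of_fst_ne

variable (A) in
def configToDblCyl : C(Config (A × ℝ) 2, ConfigDblCyl A) :=
  ⟨configToDblCylFun, continuous_configToDblCylFun⟩

theorem dblCylToConfig_configToDblCyl (x : Config (A × ℝ) 2) :
    (dblCylToConfig A (configToDblCyl A x)).1 = ![((x.1 0).1, 0), ((x.1 1).1, relHeight x)] := by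
  change (dblCylToConfig A (configToDblCylFun x)).1 = _
  unfold configToDblCylFun
  split_ifs with hx hpos
  · ext i : 1
    fin_cases i <;> simp [relHeight_eq_one_of_fst_eq hx hpos]
  · ext i : 1
    fin_cases i <;>
      simp [relHeight_eq_neg_one_of_fst_eq hx (heightDiff_neg_of_fst_eq_of_not_pos hx hpos)]
  · ext i : 1
    fin_cases i
    · simp
    · simp only [dblCylToConfig_cyl, cylCoord]
      simp
      ring

theorem relHeight_dblCylToConfig_left (p : A × A) :
    relHeight (dblCylToConfig A (DblCyl.left p)) = -1 :=
  relHeight_eq_neg_one (by simp [heightDiff]) ((horizDist_le_one _).trans (by simp [heightDiff]))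

theorem relHeight_dblCylToConfig_right (p : A × A) :
    relHeight (dblCylToConfig A (DblCyl.right p)) = 1 :=
  relHeight_eq_one (by simp [heightDiff]) ((horizDist_le_one _).trans (by simp [heightDiff]))

theorem configToDblCyl_dblCylToConfig_left (p : A × A) :
    configToDblCyl A (dblCylToConfig A (DblCyl.left p)) = DblCyl.left p :=
  configToDblCylFun_eq_left (relHeight_dblCylToConfig_left p)

theorem configToDblCyl_dblCylToConfig_right (p : A × A) :
    configToDblCyl A (dblCylToConfig A (DblCyl.right p)) = DblCyl.right p :=
  configToDblCylFun_eq_right (relHeight_dblCylToConfig_right p)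

theorem configToDblCyl_dblCylToConfig_cyl (w : Config A 2) (t : I) :
    configToDblCyl A (dblCylToConfig A (DblCyl.cyl w t)) =
      DblCyl.cyl w (cylCoord (dblCylToConfig A (DblCyl.cyl w t))) := by
  change configToDblCylFun _ = _
  rw [configToDblCylFun, dif_neg (by exact w.apply_zero_ne_apply_one)]
  congr 1
  exact Config.ext₂ rfl rfl

variable (A) in
theorem isHtpyEquiv_dblCylToConfig :
    IsHtpyEquiv (dblCylToConfig A) := by
  refine ⟨configToDblCyl A, ?_, ?_⟩
  · let τ : C(Config A 2 × I, I) :=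
      ⟨fun p => cylCoord (dblCylToConfig A (DblCyl.cyl p.1 p.2)),
        continuous_cylCoord.comp ((dblCylToConfig A).continuous.comp DblCyl.continuous_cyl)⟩
    refine DblCyl.homotopic_id_of_reparam _ τ (fun w => ?_) (fun w => ?_)
      configToDblCyl_dblCylToConfig_left configToDblCyl_dblCylToConfig_right
      configToDblCyl_dblCylToConfig_cyl
    · change cylCoord (dblCylToConfig A (DblCyl.cyl w 0)) = 0
      rw [DblCyl.cyl_zero]
      exact cylCoord_of_relHeight_eq_neg_one (relHeight_dblCylToConfig_left _)
    · change cylCoord (dblCylToConfig A (DblCyl.cyl w 1)) = 1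
      rw [DblCyl.cyl_one]
      exact cylCoord_of_relHeight_eq_one (relHeight_dblCylToConfig_right _)
  · refine (Config.homotopic_of_fst_eq _ _ (fun x i => ?_) fun x hx => ?_).symm
    · fin_cases i <;> simp [dblCylToConfig_configToDblCyl]
    · simpa [Config.heightDiff, dblCylToConfig_configToDblCyl] using
        Config.heightDiff_mul_relHeight_pos hx

end Psi

end

theorem stmt7 {n : ℕ} (A : Type) [TopologicalSpace A] [T2Space A] [SecondCountableTopology A]
    [ChartedSpace (EuclideanSpace ℝ (Fin n)) A] :
    ∃ Φ : C(DblCyl (fun w : Config A 2 => (w.1 0, w.1 1))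
            (fun w : Config A 2 => (w.1 0, w.1 1)), Config (A × ℝ) 2),
      (∀ p : A × A, Φ (Quot.mk _ (Sum.inl p)) =
        config2 (p.1, (0 : ℝ)) (p.2, (-1 : ℝ))
          (by simp [Prod.ext_iff])) ∧
      (∀ p : A × A, Φ (Quot.mk _ (Sum.inr (Sum.inr p))) =
        config2 (p.1, (0 : ℝ)) (p.2, (1 : ℝ))
          (by simp [Prod.ext_iff])) ∧
      (∀ (w : Config A 2) (t : unitInterval),
        Φ (Quot.mk _ (Sum.inr (Sum.inl (w, t)))) =
        config2 (w.1 0, (0 : ℝ)) (w.1 1, 2 * (t : ℝ) - 1)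
          (fun h => absurd (w.2 (congrArg Prod.fst h)) (by decide))) ∧
      IsHtpyEquiv Φ := by
  have : LocallyCompactSpace A := ChartedSpace.locallyCompactSpace (EuclideanSpace ℝ (Fin n)) A
  let := TopologicalSpace.metrizableSpaceMetric A
  exact ⟨dblCylToConfig A, fun _ => rfl, fun _ => rfl, fun _ _ => rfl,
    isHtpyEquiv_dblCylToConfig A⟩
end

section
/- Let A be a smooth n-manifold, B a smooth m-manifold, and f : A → B an F₂-homotopy equivalence. Fix k ≥ 1 and suppose f_k : F_k(A×J) → F_k(B×J) and f_{k+1} : F_{k+1}(A×J) → F_{k+1}(B×J) are homotopy equivalences such that f_{k+1} maps ∂F_{k+1}(A×J) into ∂F_{k+1}(B×J) and, under the canonical homeomorphisms ∂F_{k+1}(·×J) ≅ F_k(·×J) × (· × {−k,k}), the restriction of f_{k+1} to the boundary is homotopic to f_k × (f × id_{{−k,k}}). Let P_A, P_B be topological spaces, α : P_A → F_k(A×J) and β : P_B → F_k(B×J) continuous maps, and μ : P_A → P_B a homotopy equivalence with f_k ∘ α homotopic to β ∘ μ. Define ᾱ : P_A × (A × {−k,k}) → F_{k+1}(A×J) by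 ᾱ(p,(a,ε)) = (α(p),(a,ε)) (well defined because |ε| = k strictly exceeds the heights |t_i| ≤ i−1 ≤ k−1 of the points of α(p)), and define β̄ : P_B × (B × {−k,k}) → F_{k+1}(B×J) analogously from β. Then f_{k+1} ∘ ᾱ is homotopic to β̄ ∘ (μ × (f × id_{{−k,k}})). -/
open scoped Manifold unitInterval

namespace ContinuousMap.Homotopic

variable {X Y E F P Q X' Y' : Type*} [TopologicalSpace X] [TopologicalSpace Y]
  [TopologicalSpace E] [TopologicalSpace F] [TopologicalSpace P] [TopologicalSpace Q]
  [TopologicalSpace X'] [TopologicalSpace Y']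

theorem comp_prodMap_id_of_homotopic {g : C(X', Y')} {a : C(X × E, X')} {b : C(Y × F, Y')}
    {h : C(X, Y)} {e : C(E, F)} (hab : (g.comp a).Homotopic (b.comp (h.prodMap e)))
    {α : C(P, X)} {β : C(Q, Y)} {μ : C(P, Q)} (hμ : (h.comp α).Homotopic (β.comp μ)) :
    (g.comp (a.comp (α.prodMap (ContinuousMap.id E)))).Homotopic
      ((b.comp (β.prodMap (ContinuousMap.id F))).comp (μ.prodMap e)) :=
  -- both composites are re-bracketed definitionally: `(h × e) ∘ (α × id) = (h ∘ α) × e`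
  (hab.comp (.refl (α.prodMap (ContinuousMap.id E)))).trans
    ((Homotopic.refl b).comp (hμ.prodMap (.refl e)))

end ContinuousMap.Homotopic

theorem stmt16_general (A B : Type) [TopologicalSpace A]
    [TopologicalSpace B]
    (f : ContinuousMap.HomotopyEquiv A B)
    (k : ℕ)
    (fk : ContinuousMap.HomotopyEquiv (ConfigJ A k) (ConfigJ B k))
    (fk1 : ContinuousMap.HomotopyEquiv (ConfigJ A (k + 1)) (ConfigJ B (k + 1)))
    (hres : ∃ H : ContinuousMap.Homotopy
        (fk1.toFun.comp (configJAppend A k))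
        ((configJAppend B k).comp (fk.toFun.prodMap (f.toFun.prodMap
          (ContinuousMap.id ({-(k : ℝ), (k : ℝ)} : Set ℝ))))),
      ∀ (t : unitInterval) (p : ConfigJ A k × (A × ({-(k : ℝ), (k : ℝ)} : Set ℝ))),
        |((H (t, p)).1 (Fin.last k)).2| = (k : ℝ))
    {PA PB : Type*} [TopologicalSpace PA] [TopologicalSpace PB]
    (α : C(PA, ConfigJ A k)) (β : C(PB, ConfigJ B k))
    (μ : ContinuousMap.HomotopyEquiv PA PB)
    (hμ : (fk.toFun.comp α).Homotopic (β.comp μ.toFun)) :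
    (fk1.toFun.comp ((configJAppend A k).comp
        (α.prodMap (ContinuousMap.id (A × ({-(k : ℝ), (k : ℝ)} : Set ℝ)))))).Homotopic
      (((configJAppend B k).comp
        (β.prodMap (ContinuousMap.id (B × ({-(k : ℝ), (k : ℝ)} : Set ℝ))))).comp
        (μ.toFun.prodMap (f.toFun.prodMap
          (ContinuousMap.id ({-(k : ℝ), (k : ℝ)} : Set ℝ))))) := by
  obtain ⟨H, -⟩ := hres
  exact ContinuousMap.Homotopic.comp_prodMap_id_of_homotopic ⟨H⟩ hμ

theorem stmt16 {n m : ℕ} (A B : Type) [TopologicalSpace A] [T2Space A] [SecondCountableTopology A] [Nonempty A]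
    [ChartedSpace (EuclideanSpace ℝ (Fin n)) A] [IsManifold (𝓡 n) (⊤ : ℕ∞) A]
    [TopologicalSpace B] [T2Space B] [SecondCountableTopology B] [Nonempty B]
    [ChartedSpace (EuclideanSpace ℝ (Fin m)) B] [IsManifold (𝓡 m) (⊤ : ℕ∞) B]
    (f : ContinuousMap.HomotopyEquiv A B) (hf : IsF2HomotopyEquiv f)
    (k : ℕ) (hk : 1 ≤ k)
    (fk : ContinuousMap.HomotopyEquiv (ConfigJ A k) (ConfigJ B k))
    (fk1 : ContinuousMap.HomotopyEquiv (ConfigJ A (k + 1)) (ConfigJ B (k + 1)))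
    (hbd : ∀ x : ConfigJ A (k + 1), |(x.1 (Fin.last k)).2| = (k : ℝ) →
      |((fk1.toFun x).1 (Fin.last k)).2| = (k : ℝ))
    (hres : ∃ H : ContinuousMap.Homotopy
        (fk1.toFun.comp (configJAppend A k))
        ((configJAppend B k).comp (fk.toFun.prodMap (f.toFun.prodMap
          (ContinuousMap.id ({-(k : ℝ), (k : ℝ)} : Set ℝ))))),
      ∀ (t : unitInterval) (p : ConfigJ A k × (A × ({-(k : ℝ), (k : ℝ)} : Set ℝ))),
        |((H (t, p)).1 (Fin.last k)).2| = (k : ℝ))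
    {PA PB : Type*} [TopologicalSpace PA] [TopologicalSpace PB]
    (α : C(PA, ConfigJ A k)) (β : C(PB, ConfigJ B k))
    (μ : ContinuousMap.HomotopyEquiv PA PB)
    (hμ : (fk.toFun.comp α).Homotopic (β.comp μ.toFun)) :
    (fk1.toFun.comp ((configJAppend A k).comp
        (α.prodMap (ContinuousMap.id (A × ({-(k : ℝ), (k : ℝ)} : Set ℝ)))))).Homotopic
      (((configJAppend B k).comp
        (β.prodMap (ContinuousMap.id (B × ({-(k : ℝ), (k : ℝ)} : Set ℝ))))).comp
        (μ.toFun.prodMap (f.toFun.prodMap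
          (ContinuousMap.id ({-(k : ℝ), (k : ℝ)} : Set ℝ))))) :=
  stmt16_general A B f k fk fk1 hres α β μ hμ
end
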